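/- arXiv:1606.01082 — 6 statements merged into one kernel-verified Lean document; each statement's English description precedes it below -/
import Mathlib

section
/- If b = 0, then the derived subalgebra [L_0, L_0] equals L_1, where L_n = span{L_i, H_i : i ≥ n}. -/
/-! Every bracket of two generators of `L_0` lands in `L_1`: the only brackets that could leave
`L_1` are `[L_0, L_0]` and `[L_0, H_0]`, and both vanish. Conversely `ad L_0` acts on `L_i` and
`H_i` by the nonzero scalar `-i` for `i ≥ 1`, so every generator of `L_1` is itself a bracket
up to a unit. -/

/-- The span of brackets [A, B] of two subspaces of a Lie algebra. -/
def bracketSpan {g : Type*} [LieRing g] [LieAlgebra ℂ g]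
    (A B : Submodule ℂ g) : Submodule ℂ g :=
  Submodule.span ℂ {z | ∃ x ∈ A, ∃ y ∈ B, z = ⁅x, y⁆}

/-- The filtration subspace L_n = span{L_i, H_i : i ≥ n}. -/
def filtSub (g : Type*) [AddCommGroup g] [Module ℂ g] (L H : ℤ → g) (n : ℤ) :
    Submodule ℂ g :=
  Submodule.span ℂ
    ({x | ∃ i : ℤ, n ≤ i ∧ -1 ≤ i ∧ x = L i} ∪ {x | ∃ i : ℤ, n ≤ i ∧ 0 ≤ i ∧ x = H i})

section BracketSpan

variable {g : Type*} [LieRing g] [LieAlgebra ℂ g]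

theorem bracketSpan_eq_map₂ (A B : Submodule ℂ g) :
    bracketSpan A B = Submodule.map₂ (LieModule.toEnd ℂ g g : g →ₗ[ℂ] g →ₗ[ℂ] g) A B := by
  rw [Submodule.map₂_eq_span_image2, bracketSpan]
  congr 1
  ext z
  simp [Set.mem_image2, eq_comm]

theorem lie_mem_bracketSpan {A B : Submodule ℂ g} {x y : g} (hx : x ∈ A) (hy : y ∈ B) :
    ⁅x, y⁆ ∈ bracketSpan A B :=
  Submodule.subset_span ⟨x, hx, y, hy, rfl⟩

theorem bracketSpan_span_span_le {s t : Set g} {P : Submodule ℂ g}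
    (h : ∀ x ∈ s, ∀ y ∈ t, ⁅x, y⁆ ∈ P) :
    bracketSpan (Submodule.span ℂ s) (Submodule.span ℂ t) ≤ P := by
  rw [bracketSpan_eq_map₂, Submodule.map₂_span_span, Submodule.span_le]
  rintro _ ⟨x, hx, y, hy, rfl⟩
  exact h x hx y hy

end BracketSpan

section Filtration

variable {g : Type*} [AddCommGroup g] [Module ℂ g] {L H : ℤ → g}

theorem L_mem_filtSub {n i : ℤ} (hn : n ≤ i) (hi : -1 ≤ i) : L i ∈ filtSub g L H n :=
  Submodule.subset_span (Or.inl ⟨i, hn, hi, rfl⟩)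

theorem H_mem_filtSub {n i : ℤ} (hn : n ≤ i) (hi : 0 ≤ i) : H i ∈ filtSub g L H n :=
  Submodule.subset_span (Or.inr ⟨i, hn, hi, rfl⟩)

theorem filtSub_le {n : ℤ} {P : Submodule ℂ g} (hL : ∀ i, n ≤ i → -1 ≤ i → L i ∈ P)
    (hH : ∀ i, n ≤ i → 0 ≤ i → H i ∈ P) : filtSub g L H n ≤ P := by
  rw [filtSub, Submodule.span_le]
  rintro _ (⟨i, hn, hi, rfl⟩ | ⟨i, hn, hi, rfl⟩)
  exacts [hL i hn hi, hH i hn hi]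

end Filtration

section Brackets

variable {g : Type*} [LieRing g] [LieAlgebra ℂ g] {L H : ℤ → g}

theorem lie_L_L_mem_filtSub_one
    (hLL : ∀ m n : ℤ, -1 ≤ m → -1 ≤ n → ⁅L m, L n⁆ = ((m - n : ℤ) : ℂ) • L (m + n))
    {m n : ℤ} (hm : 0 ≤ m) (hn : 0 ≤ n) : ⁅L m, L n⁆ ∈ filtSub g L H 1 := by
  rw [hLL m n (by omega) (by omega)]
  rcases (show m = 0 ∧ n = 0 ∨ 1 ≤ m + n by omega) with ⟨rfl, rfl⟩ | hmn
  · simp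
  · exact Submodule.smul_mem _ _ (L_mem_filtSub hmn (by omega))

theorem lie_L_H_mem_filtSub_one
    (hLH : ∀ m n : ℤ, -1 ≤ m → 0 ≤ n → ⁅L m, H n⁆ = (-(n : ℂ)) • H (m + n))
    {m n : ℤ} (hm : 0 ≤ m) (hn : 0 ≤ n) : ⁅L m, H n⁆ ∈ filtSub g L H 1 := by
  rw [hLH m n (by omega) hn]
  rcases (show n = 0 ∨ 1 ≤ n by omega) with rfl | hn1
  · simp
  · exact Submodule.smul_mem _ _ (H_mem_filtSub (by omega) (by omega))

theorem bracketSpan_filtSub_zero_le_filtSub_one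
    (hLL : ∀ m n : ℤ, -1 ≤ m → -1 ≤ n → ⁅L m, L n⁆ = ((m - n : ℤ) : ℂ) • L (m + n))
    (hLH : ∀ m n : ℤ, -1 ≤ m → 0 ≤ n → ⁅L m, H n⁆ = (-(n : ℂ)) • H (m + n))
    (hHH : ∀ m n : ℤ, 0 ≤ m → 0 ≤ n → ⁅H m, H n⁆ = 0) :
    bracketSpan (filtSub g L H 0) (filtSub g L H 0) ≤ filtSub g L H 1 := by
  refine bracketSpan_span_span_le ?_
  rintro _ (⟨m, hm, -, rfl⟩ | ⟨m, hm, -, rfl⟩) _ (⟨n, hn, -, rfl⟩ | ⟨n, hn, -, rfl⟩)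
  · exact lie_L_L_mem_filtSub_one hLL hm hn
  · exact lie_L_H_mem_filtSub_one hLH hm hn
  · rw [← lie_skew]
    exact Submodule.neg_mem _ (lie_L_H_mem_filtSub_one hLH hn hm)
  · rw [hHH m n hm hn]
    exact Submodule.zero_mem _

theorem filtSub_one_le_bracketSpan_filtSub_zero
    (hLL : ∀ m n : ℤ, -1 ≤ m → -1 ≤ n → ⁅L m, L n⁆ = ((m - n : ℤ) : ℂ) • L (m + n))
    (hLH : ∀ m n : ℤ, -1 ≤ m → 0 ≤ n → ⁅L m, H n⁆ = (-(n : ℂ)) • H (m + n)) :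
    filtSub g L H 1 ≤ bracketSpan (filtSub g L H 0) (filtSub g L H 0) := by
  have hL0 : L 0 ∈ filtSub g L H 0 := L_mem_filtSub le_rfl (by omega)
  refine filtSub_le (fun i hi _ => ?_) (fun i hi _ => ?_)
  · have hi0 : ((0 - i : ℤ) : ℂ) ≠ 0 := by exact_mod_cast (show 0 - i ≠ 0 by omega)
    have hb : ⁅L 0, L i⁆ ∈ bracketSpan (filtSub g L H 0) (filtSub g L H 0) :=
      lie_mem_bracketSpan hL0 (L_mem_filtSub (by omega) (by omega))
    rwa [hLL 0 i (by omega) (by omega), zero_add, Submodule.smul_mem_iff _ hi0] at hb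
  · have hi0 : -(i : ℂ) ≠ 0 := by exact_mod_cast (show -i ≠ 0 by omega)
    have hb : ⁅L 0, H i⁆ ∈ bracketSpan (filtSub g L H 0) (filtSub g L H 0) :=
      lie_mem_bracketSpan hL0 (H_mem_filtSub (by omega) (by omega))
    rwa [hLH 0 i (by omega) (by omega), zero_add, Submodule.smul_mem_iff _ hi0] at hb

end Brackets

theorem derived_L0_eq_L1_b_zero_general
    (g : Type*) [LieRing g] [LieAlgebra ℂ g] (L H : ℤ → g)
    (hLL : ∀ m n : ℤ, -1 ≤ m → -1 ≤ n →
      ⁅L m, L n⁆ = ((m - n : ℤ) : ℂ) • L (m + n))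
    (hLH : ∀ m n : ℤ, -1 ≤ m → 0 ≤ n →
      ⁅L m, H n⁆ = (-(n : ℂ)) • H (m + n))
    (hHH : ∀ m n : ℤ, 0 ≤ m → 0 ≤ n → ⁅H m, H n⁆ = 0) :
    bracketSpan (filtSub g L H 0) (filtSub g L H 0) = filtSub g L H 1 :=
  le_antisymm (bracketSpan_filtSub_zero_le_filtSub_one hLL hLH hHH)
    (filtSub_one_le_bracketSpan_filtSub_zero hLL hLH)

theorem derived_L0_eq_L1_b_zero
    (g : Type*) [LieRing g] [LieAlgebra ℂ g] (L H : ℤ → g)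
    (hH0 : ∀ n : ℤ, n < 0 → H n = 0)
    (hLL : ∀ m n : ℤ, -1 ≤ m → -1 ≤ n →
      ⁅L m, L n⁆ = ((m - n : ℤ) : ℂ) • L (m + n))
    (hLH : ∀ m n : ℤ, -1 ≤ m → 0 ≤ n →
      ⁅L m, H n⁆ = (-(n : ℂ)) • H (m + n))
    (hHH : ∀ m n : ℤ, 0 ≤ m → 0 ≤ n → ⁅H m, H n⁆ = 0) :
    bracketSpan (filtSub g L H 0) (filtSub g L H 0) = filtSub g L H 1 :=
  derived_L0_eq_L1_b_zero_general g L H hLL hLH hHH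
end

section
/- If b ≠ 0, then the 2n-th term of the derived series of L_0 is contained in L_n for every n ≥ 0. -/
/-- The derived series of the subspace L_0: D 0 = L_0, D (k+1) = [D k, D k]. -/
def derivedSeq (g : Type*) [LieRing g] [LieAlgebra ℂ g] (L H : ℤ → g) : ℕ → Submodule ℂ g
  | 0 => filtSub g L H 0
  | k + 1 => bracketSpan (derivedSeq g L H k) (derivedSeq g L H k)

/-!
The filtration is refined to a two-parameter one, `span{L_i : i ≥ a} + span{H_j : j ≥ c}`,
whose diagonal `(n, n)` is `filtSub n` definitionally.
Since `[L_m, L_m] = 0`, brackets of two `L_i` with `i ≥ a` have index `≥ 2a + 1`, while brackets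
involving an `H` have index `≥ a + c`. Hence each derived step sends `(a, c)` to
`(2a + 1, a + c)`, and two steps take `(k, k)` to `(4k + 3, 4k + 1) ≥ (k + 1, k + 1)`.
-/

section

variable {g : Type*} [LieRing g] [LieAlgebra ℂ g]

theorem bracketSpan_mono {A A' B B' : Submodule ℂ g} (hA : A ≤ A') (hB : B ≤ B') :
    bracketSpan A B ≤ bracketSpan A' B' := by
  apply Submodule.span_mono
  rintro z ⟨x, hx, y, hy, rfl⟩
  exact ⟨x, hA hx, y, hB hy, rfl⟩

theorem bracketSpan_span_le {S S' : Set g} {T : Submodule ℂ g}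
    (h : ∀ x ∈ S, ∀ y ∈ S', ⁅x, y⁆ ∈ T) :
    bracketSpan (Submodule.span ℂ S) (Submodule.span ℂ S') ≤ T := by
  rw [bracketSpan, Submodule.span_le]
  rintro z ⟨x, hx, y, hy, rfl⟩
  induction hx, hy using Submodule.span_induction₂ with
  | mem_mem x y hx hy => exact h x hx y hy
  | zero_left y _ => simp
  | zero_right x _ => simp
  | add_left x y z _ _ _ hxz hyz => rw [add_lie]; exact T.add_mem hxz hyz
  | add_right x y z _ _ _ hxy hxz => rw [lie_add]; exact T.add_mem hxy hxz
  | smul_left r x y _ _ hxy => rw [smul_lie]; exact T.smul_mem r hxy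
  | smul_right r x y _ _ hxy => rw [lie_smul]; exact T.smul_mem r hxy

def biFiltSub (L H : ℤ → g) (a c : ℤ) : Submodule ℂ g :=
  Submodule.span ℂ
    ({x | ∃ i : ℤ, a ≤ i ∧ -1 ≤ i ∧ x = L i} ∪ {x | ∃ i : ℤ, c ≤ i ∧ 0 ≤ i ∧ x = H i})

theorem biFiltSub_anti (L H : ℤ → g) {a a' c c' : ℤ} (ha : a ≤ a') (hc : c ≤ c') :
    biFiltSub L H a' c' ≤ biFiltSub L H a c := by
  apply Submodule.span_mono
  rintro x (⟨i, hi, hi₁, rfl⟩ | ⟨i, hi, hi₀, rfl⟩)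
  · exact Or.inl ⟨i, ha.trans hi, hi₁, rfl⟩
  · exact Or.inr ⟨i, hc.trans hi, hi₀, rfl⟩

variable {b : ℂ} {L H : ℤ → g}

theorem bracketSpan_biFiltSub_le
    (hLL : ∀ m n : ℤ, -1 ≤ m → -1 ≤ n →
      ⁅L m, L n⁆ = ((m - n : ℤ) : ℂ) • L (m + n))
    (hLH : ∀ m n : ℤ, -1 ≤ m → 0 ≤ n →
      ⁅L m, H n⁆ = (-(b * (m : ℂ) + (n : ℂ) + b)) • H (m + n))
    (hHH : ∀ m n : ℤ, 0 ≤ m → 0 ≤ n → ⁅H m, H n⁆ = 0)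
    {a : ℤ} (c : ℤ) (ha : 0 ≤ a) :
    bracketSpan (biFiltSub L H a c) (biFiltSub L H a c) ≤ biFiltSub L H (2 * a + 1) (a + c) := by
  have mem_L : ∀ i, 2 * a + 1 ≤ i → L i ∈ biFiltSub L H (2 * a + 1) (a + c) := fun i hi =>
    Submodule.subset_span (Or.inl ⟨i, hi, by omega, rfl⟩)
  have mem_H : ∀ i, a + c ≤ i → 0 ≤ i → H i ∈ biFiltSub L H (2 * a + 1) (a + c) := fun i hi hi₀ =>
    Submodule.subset_span (Or.inr ⟨i, hi, hi₀, rfl⟩)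
  apply bracketSpan_span_le
  rintro _ (⟨m, hm, hm₁, rfl⟩ | ⟨m, hm, hm₀, rfl⟩) _ (⟨n, hn, hn₁, rfl⟩ | ⟨n, hn, hn₀, rfl⟩)
  · rw [hLL m n hm₁ hn₁]
    rcases eq_or_ne m n with rfl | hmn
    · simp
    · exact Submodule.smul_mem _ _ (mem_L _ (by omega))
  · rw [hLH m n hm₁ hn₀]
    exact Submodule.smul_mem _ _ (mem_H _ (by omega) (by omega))
  · rw [← lie_skew, hLH n m hn₁ hm₀, ← neg_smul, add_comm n m]
    exact Submodule.smul_mem _ _ (mem_H _ (by omega) (by omega))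
  · rw [hHH m n hm₀ hn₀]
    exact Submodule.zero_mem _

theorem derivedSeq_succ_le_biFiltSub
    (hLL : ∀ m n : ℤ, -1 ≤ m → -1 ≤ n →
      ⁅L m, L n⁆ = ((m - n : ℤ) : ℂ) • L (m + n))
    (hLH : ∀ m n : ℤ, -1 ≤ m → 0 ≤ n →
      ⁅L m, H n⁆ = (-(b * (m : ℂ) + (n : ℂ) + b)) • H (m + n))
    (hHH : ∀ m n : ℤ, 0 ≤ m → 0 ≤ n → ⁅H m, H n⁆ = 0)
    {k : ℕ} {a c : ℤ} (ha : 0 ≤ a) (h : derivedSeq g L H k ≤ biFiltSub L H a c) :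
    derivedSeq g L H (k + 1) ≤ biFiltSub L H (2 * a + 1) (a + c) :=
  (bracketSpan_mono h h).trans (bracketSpan_biFiltSub_le hLL hLH hHH c ha)

end

theorem derivedSeries_le_filtration_b_ne_zero_general
    (g : Type*) [LieRing g] [LieAlgebra ℂ g] (b : ℂ) (L H : ℤ → g)
    (hLL : ∀ m n : ℤ, -1 ≤ m → -1 ≤ n →
      ⁅L m, L n⁆ = ((m - n : ℤ) : ℂ) • L (m + n))
    (hLH : ∀ m n : ℤ, -1 ≤ m → 0 ≤ n →
      ⁅L m, H n⁆ = (-(b * (m : ℂ) + (n : ℂ) + b)) • H (m + n))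
    (hHH : ∀ m n : ℤ, 0 ≤ m → 0 ≤ n → ⁅H m, H n⁆ = 0) :
    ∀ n : ℕ, derivedSeq g L H (2 * n) ≤ filtSub g L H n := by
  intro n
  induction n with
  | zero => exact le_rfl
  | succ k ih =>
    have odd := derivedSeq_succ_le_biFiltSub hLL hLH hHH (by positivity) ih
    have even := derivedSeq_succ_le_biFiltSub hLL hLH hHH (by positivity) odd
    exact even.trans (biFiltSub_anti L H (by push_cast; omega) (by push_cast; omega))

theorem derivedSeries_le_filtration_b_ne_zero
    (g : Type*) [LieRing g] [LieAlgebra ℂ g] (b : ℂ) (hb : b ≠ 0) (L H : ℤ → g)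
    (hH0 : ∀ n : ℤ, n < 0 → H n = 0)
    (hLL : ∀ m n : ℤ, -1 ≤ m → -1 ≤ n →
      ⁅L m, L n⁆ = ((m - n : ℤ) : ℂ) • L (m + n))
    (hLH : ∀ m n : ℤ, -1 ≤ m → 0 ≤ n →
      ⁅L m, H n⁆ = (-(b * (m : ℂ) + (n : ℂ) + b)) • H (m + n))
    (hHH : ∀ m n : ℤ, 0 ≤ m → 0 ≤ n → ⁅H m, H n⁆ = 0) :
    ∀ n : ℕ, derivedSeq g L H (2 * n) ≤ filtSub g L H n :=
  derivedSeries_le_filtration_b_ne_zero_general g b L H hLL hLH hHH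
end

section
/- For every Δ, α, β ∈ ℂ, the assignments L_λ v = (∂ + α + Δλ)v and H_λ v = β·δ_{b,0}·v extend to a conformal module structure on M = ℂ[∂]v over W(b); i.e., the conformal module axioms L_λ(L_μ v) - L_μ(L_λ v) = [L_λ L]_{λ+μ} v, L_λ(H_μ v) - H_μ(L_λ v) = [L_λ H]_{λ+μ} v, and H_λ(H_μ v) = H_μ(H_λ v) hold, where [L_λ L] = (∂+2λ)L, [L_λ H] = (∂+(1-b)λ)H, [H_λ H] = 0. -/
open MvPolynomial

/- We work in R = ℂ[∂, λ, μ] := MvPolynomial (Fin 3) ℂ, with X 0 = ∂, X 1 = λ,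
X 2 = μ.  The rank-one module M = ℂ[∂]v is identified with the subspace of
polynomials in ∂, and the λ-action L_λ v = (∂ + α + Δλ)v extends to
L_lam (f(∂)v) = (∂ + α + Δ·lam) f(∂ + lam) v, and similarly
H_lam (f(∂)v) = δ_{b,0} β f(∂ + lam) v. -/

/-- Substitution ∂ ↦ ∂ + lam. -/
noncomputable def shiftD (lam f : MvPolynomial (Fin 3) ℂ) : MvPolynomial (Fin 3) ℂ :=
  aeval (fun i : Fin 3 => if i = 0 then X 0 + lam else X i) f

/-! The shift `f(∂) ↦ f(∂ + lam)` is a ℂ-algebra endomorphism fixing `λ` and `μ`, so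
`L_λ L_μ f`, `L_μ L_λ f` and `L_{λ+μ} f` are all polynomial multiples of `f(∂ + λ + μ)`, and each
axiom becomes an identity between these multipliers. In the mixed axiom the two sides differ
by `b λ δ_{b,0} β f(∂ + λ + μ)`, which vanishes because `b δ_{b,0} = 0`. -/

section Shift

variable (lam : MvPolynomial (Fin 3) ℂ)

lemma shiftD_mul (f g : MvPolynomial (Fin 3) ℂ) :
    shiftD lam (f * g) = shiftD lam f * shiftD lam g :=
  map_mul _ f g

lemma shiftD_add (f g : MvPolynomial (Fin 3) ℂ) :
    shiftD lam (f + g) = shiftD lam f + shiftD lam g :=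
  map_add _ f g

lemma shiftD_C (c : ℂ) : shiftD lam (C c) = C c :=
  aeval_C _ c

lemma shiftD_X_zero : shiftD lam (X 0) = X 0 + lam := by
  simp [shiftD]

lemma shiftD_X_of_ne_zero {i : Fin 3} (hi : i ≠ 0) : shiftD lam (X i) = X i := by
  simp [shiftD, hi]

lemma shiftD_polynomial_aeval (p : MvPolynomial (Fin 3) ℂ) (q : Polynomial ℂ) :
    shiftD lam (Polynomial.aeval p q) = Polynomial.aeval (shiftD lam p) q :=
  (Polynomial.aeval_algHom_apply _ p q).symm

lemma shiftD_ite_C_zero (P : Prop) [Decidable P] (c : ℂ) :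
    shiftD lam (if P then C c else 0) = if P then C c else 0 := by
  split_ifs
  · exact shiftD_C lam c
  · exact map_zero _

end Shift

lemma ite_C_mul_C_eq_zero {R σ : Type*} [CommSemiring R] [DecidableEq R] (b β : R) :
    (if b = 0 then C β else 0) * C b = (0 : MvPolynomial σ R) := by
  split_ifs with hb
  · rw [hb, C_0, mul_zero]
  · exact zero_mul _

theorem Mmod_is_conformal_module (b Δ α β : ℂ) :
    ∀ q : Polynomial ℂ,
      let f : MvPolynomial (Fin 3) ℂ := Polynomial.aeval (X 0) q
      let Lac : MvPolynomial (Fin 3) ℂ → MvPolynomial (Fin 3) ℂ → MvPolynomial (Fin 3) ℂ :=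
        fun lam p => (X 0 + C α + C Δ * lam) * shiftD lam p
      let Hac : MvPolynomial (Fin 3) ℂ → MvPolynomial (Fin 3) ℂ → MvPolynomial (Fin 3) ℂ :=
        fun lam p => (if b = 0 then C β else 0) * shiftD lam p
      -- L_λ(L_μ v) - L_μ(L_λ v) = [L_λ L]_{λ+μ} v, where [L_λ L] = (∂+2λ)L
      Lac (X 1) (Lac (X 2) f) - Lac (X 2) (Lac (X 1) f)
          = (X 1 - X 2) * Lac (X 1 + X 2) f ∧
      -- L_λ(H_μ v) - H_μ(L_λ v) = [L_λ H]_{λ+μ} v, where [L_λ H] = (∂+(1-b)λ)H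
      Lac (X 1) (Hac (X 2) f) - Hac (X 2) (Lac (X 1) f)
          = (-(C b * X 1) - X 2) * Hac (X 1 + X 2) f ∧
      -- H_λ(H_μ v) = H_μ(H_λ v), since [H_λ H] = 0
      Hac (X 1) (Hac (X 2) f) = Hac (X 2) (Hac (X 1) f) := by
  intro q f Lac Hac
  simp only [Lac, Hac, f, shiftD_mul, shiftD_add, shiftD_C, shiftD_ite_C_zero,
    shiftD_polynomial_aeval, shiftD_X_zero, shiftD_X_of_ne_zero, ne_eq,
    Fin.reduceEq, not_false_eq_true]
  rw [add_right_comm (X 0) (X 2) (X 1), ← add_assoc (X 0) (X 1) (X 2)]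
  refine ⟨by ring, ?_, by ring⟩
  linear_combination (X 1 * Polynomial.aeval (X 0 + X 1 + X 2) q) * ite_C_mul_C_eq_zero b β
end

section
/- If Δ = β = 0, then the ℂ[∂]-submodule (∂+α)ℂ[∂]v of M_{0,α,0} is a proper nonzero conformal submodule, hence M_{0,α,0} is reducible; moreover this submodule is isomorphic as a conformal module to M_{1,α,0}. -/
open Polynomial

/- The rank-one conformal module M_{Δ,α,β} = ℂ[∂]v over the Heisenberg-Virasoro
conformal algebra W(0) is identified with ℂ[X] (X = ∂).  The λ-actions, with λ
the outer variable of ℂ[∂][λ] = Polynomial (Polynomial ℂ), are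
L_λ (f(∂)v) = (∂ + α + Δλ) f(∂+λ) v and H_λ (f(∂)v) = β f(∂+λ) v. -/

/-- Substitution f(∂) ↦ f(∂+λ) in ℂ[∂][λ]. -/
noncomputable def shP (f : Polynomial ℂ) : Polynomial (Polynomial ℂ) :=
  Polynomial.aeval (Polynomial.C Polynomial.X + Polynomial.X) f

/-- λ-action of L on M_{Δ,α,β}: L_λ(f(∂)v) = (∂ + α + Δλ) f(∂+λ) v. -/
noncomputable def LA (Δ α : ℂ) (f : Polynomial ℂ) : Polynomial (Polynomial ℂ) :=
  (Polynomial.C (Polynomial.X + Polynomial.C α)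
    + Polynomial.C (Polynomial.C Δ) * Polynomial.X) * shP f

/-- λ-action of H on M_{Δ,α,β}: H_λ(f(∂)v) = β f(∂+λ) v. -/
noncomputable def HA (β : ℂ) (f : Polynomial ℂ) : Polynomial (Polynomial ℂ) :=
  Polynomial.C (Polynomial.C β) * shP f

/- The generator u = (∂+α)v of the submodule satisfies
L_λ u = (∂+α)(∂+λ+α)v = (∂+α+λ)u, with the same α but conformal weight 1, and H_λ u = 0.
Hence f(∂)u ↦ f(∂)v is an isomorphism onto M_{1,α,0}; the submodule is proper since
∂+α is not a unit of ℂ[∂]. -/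

lemma shP_mul (f g : ℂ[X]) : shP (f * g) = shP f * shP g :=
  map_mul _ f g

lemma shP_X_add_C (α : ℂ) : shP (X + C α) = C (X + C α) + X := by
  simp only [shP, map_add, aeval_X, aeval_C, Polynomial.algebraMap_apply, algebraMap_eq]
  ring

lemma LA_zero (α : ℂ) (f : ℂ[X]) : LA 0 α f = C (X + C α) * shP f := by
  simp [LA]

lemma HA_zero (f : ℂ[X]) : HA 0 f = 0 := by
  simp [HA]

lemma LA_zero_X_add_C_mul (α : ℂ) (g : ℂ[X]) :
    LA 0 α ((X + C α) * g) = C (X + C α) * LA 1 α g := by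
  rw [LA_zero, shP_mul, shP_X_add_C, LA, map_one, map_one, one_mul]

lemma coeff_LA_zero_mem_span (α : ℂ) (f : ℂ[X]) (j : ℕ) :
    (LA 0 α f).coeff j ∈ Ideal.span {X + C α} := by
  rw [LA_zero, coeff_C_mul]
  exact Ideal.mul_mem_right _ _ (Ideal.mem_span_singleton_self _)

theorem M_zero_alpha_zero_reducible (α : ℂ) :
    let W : Submodule (Polynomial ℂ) (Polynomial ℂ) :=
      Ideal.span {Polynomial.X + Polynomial.C α}
    W ≠ ⊥ ∧ W ≠ ⊤ ∧
    (∀ f ∈ W, ∀ j : ℕ, (LA 0 α f).coeff j ∈ W ∧ (HA 0 f).coeff j ∈ W) ∧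
    ∃ e : W ≃ₗ[Polynomial ℂ] Polynomial ℂ,
      ∀ (f : W) (j : ℕ) (h : (LA 0 α (f : Polynomial ℂ)).coeff j ∈ W),
        e ⟨(LA 0 α (f : Polynomial ℂ)).coeff j, h⟩ = (LA 1 α (e f)).coeff j ∧
        (HA 0 (e f)).coeff j = 0 := by
  intro W
  have hne : (X + C α : ℂ[X]) ≠ 0 := X_add_C_ne_zero α
  refine ⟨Ideal.span_singleton_eq_bot.not.mpr hne,
    Ideal.span_singleton_eq_top.not.mpr (not_isUnit_X_add_C α),
    fun f _ j => ⟨coeff_LA_zero_mem_span α f j, by simp [HA_zero]⟩, ?_⟩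
  let e := LinearEquiv.toSpanNonzeroSingleton ℂ[X] ℂ[X] (X + C α) hne
  refine ⟨e.symm, fun f j h => ⟨?_, by simp [HA_zero]⟩⟩
  have hf : (f : ℂ[X]) = e.symm f * (X + C α) :=
    (congrArg Subtype.val (e.apply_symm_apply f)).symm
  rw [LinearEquiv.symm_apply_eq]
  apply Subtype.ext
  rw [LinearEquiv.toSpanNonzeroSingleton_apply]
  simp only [hf, LA_zero_X_add_C_mul, coeff_C_mul, smul_eq_mul, mul_comm]
end

section
/- If Δ ≠ 0, then the rank-one conformal module M_{Δ,α} = ℂ[∂]v over the Virasoro conformal algebra, with L_λ v = (∂+α+Δλ)v, is irreducible. -/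
/-!
The coefficient of the highest power `λ^(deg f + 1)` in `L_λ (f(∂) v) = (∂ + α + Δλ) f(∂ + λ) v`
is the constant `Δ · lc(f)`. For `Δ ≠ 0` this is a unit of `ℂ[∂]`, so every nonzero submodule
closed under the λ-action contains a unit and is everything.
-/

open Polynomial

lemma natDegree_C_X_add_X {R : Type*} [CommSemiring R] [Nontrivial R] :
    (C X + X : R[X][X]).natDegree = 1 := by
  rw [add_comm, natDegree_X_add_C]

lemma leadingCoeff_C_X_add_X {R : Type*} [CommSemiring R] :
    (C X + X : R[X][X]).leadingCoeff = 1 := by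
  rw [add_comm, leadingCoeff_X_add_C]

lemma shP_eq_comp (f : ℂ[X]) : shP f = (f.map C).comp (C X + X) := by
  rw [shP, aeval_def, comp, eval₂_map]
  rfl

lemma natDegree_shP (f : ℂ[X]) : (shP f).natDegree = f.natDegree := by
  rw [shP_eq_comp, natDegree_comp, natDegree_C_X_add_X,
    natDegree_map_eq_of_injective C_injective, mul_one]

lemma leadingCoeff_shP (f : ℂ[X]) : (shP f).leadingCoeff = C f.leadingCoeff := by
  rw [shP_eq_comp, leadingCoeff_comp (by rw [natDegree_C_X_add_X]; exact one_ne_zero),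
    leadingCoeff_C_X_add_X, one_pow, mul_one, leadingCoeff_map]

lemma coeff_LA_natDegree_add_one (Δ α : ℂ) (f : ℂ[X]) :
    (LA Δ α f).coeff (f.natDegree + 1) = C (Δ * f.leadingCoeff) := by
  have h_above : (shP f).coeff (f.natDegree + 1) = 0 :=
    coeff_eq_zero_of_natDegree_lt (by rw [natDegree_shP]; omega)
  have h_top : (shP f).coeff f.natDegree = C f.leadingCoeff := by
    rw [← natDegree_shP f, coeff_natDegree, leadingCoeff_shP]
  rw [LA, add_mul, coeff_add, coeff_C_mul, h_above, mul_zero, zero_add,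
    mul_assoc, coeff_C_mul, coeff_X_mul, h_top, C_mul]

theorem M_Delta_alpha_irreducible (Δ α : ℂ) (hΔ : Δ ≠ 0) :
    ∀ W : Submodule (Polynomial ℂ) (Polynomial ℂ),
      (∀ f ∈ W, ∀ j : ℕ, (LA Δ α f).coeff j ∈ W) →
      W = ⊥ ∨ W = ⊤ := by
  intro W hW
  refine or_iff_not_imp_left.mpr fun hW_ne_bot => ?_
  obtain ⟨f, hfW, hf⟩ := Submodule.exists_mem_ne_zero_of_ne_bot hW_ne_bot
  have h_mem : C (Δ * f.leadingCoeff) ∈ W :=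
    coeff_LA_natDegree_add_one Δ α f ▸ hW f hfW (f.natDegree + 1)
  have h_unit : IsUnit (C (Δ * f.leadingCoeff)) :=
    isUnit_C.mpr (mul_ne_zero hΔ (leadingCoeff_ne_zero.mpr hf)).isUnit
  exact Ideal.eq_top_of_isUnit_mem W h_mem h_unit
end

section
/- Every finite irreducible conformal module over a Lie conformal algebra is free of finite rank as a ℂ[∂]-module (equivalently, it contains no nonzero torsion element). -/
/- Let `q(∂) v = 0` with `q ≠ 0`, and let `n` be the largest index with `a_(n) v ≠ 0` (it exists
by locality). Each `∂` raises the top nonvanishing index by one, so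
`0 = a_(n + deg q) (q(∂) v) = lc(q) · (n+1)⋯(n + deg q) · a_(n) v`, a contradiction. Hence the
torsion submodule is a trivial conformal submodule, which irreducibility forces to be zero; over
the PID `ℂ[∂]` a finitely generated torsion-free module is free. -/

open Polynomial

namespace ConformalModule

variable {K V : Type*} [Field K] [AddCommGroup V] [Module K[X] V] [Module K V]

/-- The relation `a_λ (∂ v) = (∂ + λ) (a_λ v)`, written for the `j`-th actions `f j = a_(j)`. -/
def ConformalSesquilinear (f : ℕ → V →ₗ[K] V) : Prop :=
  ∀ (m : ℕ) (w : V), f m ((X : K[X]) • w) = (X : K[X]) • f m w + (m : K) • f (m - 1) w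

theorem ConformalSesquilinear.apply_X_pow_smul {f : ℕ → V →ₗ[K] V} (hf : ConformalSesquilinear f)
    {n : ℕ} {v : V} (hv : ∀ i > n, f i v = 0) (k : ℕ) :
    (∀ i > n + k, f i ((X : K[X]) ^ k • v) = 0) ∧
      f (n + k) ((X : K[X]) ^ k • v) = ((n + k).descFactorial k : K) • f n v := by
  induction k with
  | zero => simpa using hv
  | succ k ih =>
    obtain ⟨ih_above, ih_top⟩ := ih
    rw [pow_succ', mul_smul]
    refine ⟨fun i hi => ?_, ?_⟩
    · rw [hf, ih_above i (by omega), ih_above (i - 1) (by omega), smul_zero, smul_zero,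
        add_zero]
    · rw [hf, ih_above _ (by omega), show n + (k + 1) - 1 = n + k by omega, ih_top,
        smul_zero, zero_add, smul_smul, ← add_assoc, Nat.succ_descFactorial_succ]
      push_cast
      ring_nf

theorem ConformalSesquilinear.apply_natDegree_smul [IsScalarTower K K[X] V]
    {f : ℕ → V →ₗ[K] V} (hf : ConformalSesquilinear f) {n : ℕ} {v : V}
    (hv : ∀ i > n, f i v = 0) (q : K[X]) :
    f (n + q.natDegree) (q • v)
      = (q.leadingCoeff * (n + q.natDegree).descFactorial q.natDegree) • f n v := by
  have hq : q • v = ∑ i ∈ Finset.range (q.natDegree + 1), q.coeff i • ((X : K[X]) ^ i • v) := by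
    conv_lhs => rw [q.as_sum_range_C_mul_X_pow]
    simp only [Finset.sum_smul, mul_smul, ← algebraMap_eq, algebraMap_smul]
  rw [hq, map_sum, Finset.sum_range_succ, Finset.sum_eq_zero, zero_add, map_smul,
    (hf.apply_X_pow_smul hv _).2, smul_smul, leadingCoeff]
  intro i hi
  rw [map_smul, (hf.apply_X_pow_smul hv i).1 _ (by simp at hi; omega), smul_zero]

theorem ConformalSesquilinear.apply_eq_zero_of_smul_eq_zero [CharZero K] [IsScalarTower K K[X] V]
    {f : ℕ → V →ₗ[K] V} (hf : ConformalSesquilinear f) {v : V}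
    (hloc : ∃ N, ∀ i ≥ N, f i v = 0) {q : K[X]} (hq : q ≠ 0) (hqv : q • v = 0) (m : ℕ) :
    f m v = 0 := by
  induction m using Nat.strong_decreasing_induction with
  | base =>
    obtain ⟨N, hN⟩ := hloc
    exact ⟨N, fun i hi => hN i hi.le⟩
  | step n hv =>
    have hc : q.leadingCoeff * ((n + q.natDegree).descFactorial q.natDegree : K) ≠ 0 :=
      mul_ne_zero (leadingCoeff_ne_zero.mpr hq)
        (Nat.cast_ne_zero.mpr (Nat.descFactorial_eq_zero_iff_lt.not.mpr (by omega)))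
    have h := hf.apply_natDegree_smul hv q
    rwa [hqv, map_zero, eq_comm, smul_eq_zero_iff_right hc] at h

end ConformalModule

open ConformalModule

theorem finite_irreducible_conformal_module_free_general
    (A V : Type*)
    [AddCommGroup V] [Module (Polynomial ℂ) V]
    [Module ℂ V] [IsScalarTower ℂ (Polynomial ℂ) V]
    (act : ℕ → A → V → V)
    -- bilinearity of the j-products and j-actions
    (hlin1 : ∀ (n : ℕ) (a : A), IsLinearMap ℂ (act n a))
    -- locality of the products and of the actions
    (hloc : ∀ (a : A) (v : V), ∃ N : ℕ, ∀ n ≥ N, act n a v = 0)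
    -- a_(n)(∂v) = ∂(a_(n) v) + n a_(n-1) v
    (hpv0 : ∀ (a : A) (v : V),
      act 0 a ((Polynomial.X : Polynomial ℂ) • v)
        = (Polynomial.X : Polynomial ℂ) • act 0 a v)
    (hpv : ∀ (n : ℕ) (a : A) (v : V),
      act (n + 1) a ((Polynomial.X : Polynomial ℂ) • v)
        = (Polynomial.X : Polynomial ℂ) • act (n + 1) a v + ((n : ℂ) + 1) • act n a v)
    -- V is finite (finitely generated over ℂ[∂])
    (hfin : Module.Finite (Polynomial ℂ) V)
    -- V is nontrivial
    (hnontriv : ∃ (n : ℕ) (a : A) (v : V), act n a v ≠ 0)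
    -- V is irreducible: the only conformal submodules are 0 and V
    (hirr : ∀ W : Submodule (Polynomial ℂ) V,
      (∀ (n : ℕ) (a : A), ∀ v ∈ W, act n a v ∈ W) → W = ⊥ ∨ W = ⊤) :
    Module.Free (Polynomial ℂ) V ∧
    ∀ (v : V) (q : Polynomial ℂ), q ≠ 0 → q • v = 0 → v = 0 := by
  have hsesq (a : A) : ConformalSesquilinear fun n => IsLinearMap.mk' (act n a) (hlin1 n a)
    | 0, v => by simpa using hpv0 a v
    | n + 1, v => by simpa using hpv n a v
  have torsion_killed {v : V} (hv : v ∈ Submodule.torsion ℂ[X] V) (n : ℕ) (a : A) :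
      act n a v = 0 := by
    obtain ⟨⟨q, hq⟩, hqv⟩ := (Submodule.mem_torsion_iff v).mp hv
    exact (hsesq a).apply_eq_zero_of_smul_eq_zero (hloc a v)
      (mem_nonZeroDivisors_iff_ne_zero.mp hq) hqv n
  have htorsion : Submodule.torsion ℂ[X] V = ⊥ := by
    refine (hirr _ fun n a v hv => torsion_killed hv n a ▸ zero_mem _).resolve_right fun htop => ?_
    obtain ⟨n, a, v, hv⟩ := hnontriv
    exact hv (torsion_killed (htop ▸ Submodule.mem_top) n a)
  have : Module.IsTorsionFree ℂ[X] V := Submodule.isTorsionFree_iff_torsion_eq_bot.mpr htorsion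
  exact ⟨Module.free_of_finite_type_torsion_free', fun v q hq hqv =>
    (smul_eq_zero.mp hqv).resolve_left hq⟩

theorem finite_irreducible_conformal_module_free
    (A V : Type*)
    [AddCommGroup A] [Module (Polynomial ℂ) A]
    [Module ℂ A] [IsScalarTower ℂ (Polynomial ℂ) A]
    [AddCommGroup V] [Module (Polynomial ℂ) V]
    [Module ℂ V] [IsScalarTower ℂ (Polynomial ℂ) V]
    (p : ℕ → A → A → A) (act : ℕ → A → V → V)
    -- bilinearity of the j-products and j-actions
    (hplin1 : ∀ (n : ℕ) (a : A), IsLinearMap ℂ (p n a))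
    (hplin2 : ∀ (n : ℕ) (b : A), IsLinearMap ℂ (fun a => p n a b))
    (hlin1 : ∀ (n : ℕ) (a : A), IsLinearMap ℂ (act n a))
    (hlin2 : ∀ (n : ℕ) (v : V), IsLinearMap ℂ (fun a => act n a v))
    -- locality of the products and of the actions
    (hploc : ∀ (a b : A), ∃ N : ℕ, ∀ n ≥ N, p n a b = 0)
    (hloc : ∀ (a : A) (v : V), ∃ N : ℕ, ∀ n ≥ N, act n a v = 0)
    -- (∂a)_(n) b = -n a_(n-1) b in A
    (hppa0 : ∀ (a b : A), p 0 ((Polynomial.X : Polynomial ℂ) • a) b = 0)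
    (hppa : ∀ (n : ℕ) (a b : A),
      p (n + 1) ((Polynomial.X : Polynomial ℂ) • a) b = (-((n : ℂ) + 1)) • p n a b)
    -- skew-symmetry: a_(n) b = Σ_j (-1)^{n+j+1} (∂^j/j!) (b_(n+j) a)
    (hskew : ∀ (n : ℕ) (a b : A),
      p n a b = ∑ᶠ j : ℕ, ((-1 : ℂ) ^ (n + j + 1) / (j.factorial : ℂ)) •
        (((Polynomial.X : Polynomial ℂ) ^ j) • p (n + j) b a))
    -- Jacobi identity in terms of j-products
    (hjac : ∀ (m n : ℕ) (a b c : A),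
      p m a (p n b c) - p n b (p m a c)
        = ∑ j ∈ Finset.range (m + 1), (m.choose j : ℂ) • p (m + n - j) (p j a b) c)
    -- (∂a)_(n) v = -n a_(n-1) v
    (hpa0 : ∀ (a : A) (v : V), act 0 ((Polynomial.X : Polynomial ℂ) • a) v = 0)
    (hpa : ∀ (n : ℕ) (a : A) (v : V),
      act (n + 1) ((Polynomial.X : Polynomial ℂ) • a) v
        = (-((n : ℂ) + 1)) • act n a v)
    -- a_(n)(∂v) = ∂(a_(n) v) + n a_(n-1) v
    (hpv0 : ∀ (a : A) (v : V),
      act 0 a ((Polynomial.X : Polynomial ℂ) • v)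
        = (Polynomial.X : Polynomial ℂ) • act 0 a v)
    (hpv : ∀ (n : ℕ) (a : A) (v : V),
      act (n + 1) a ((Polynomial.X : Polynomial ℂ) • v)
        = (Polynomial.X : Polynomial ℂ) • act (n + 1) a v + ((n : ℂ) + 1) • act n a v)
    -- the conformal module commutator formula
    (hcomm : ∀ (m n : ℕ) (a b : A) (v : V),
      act m a (act n b v) - act n b (act m a v)
        = ∑ j ∈ Finset.range (m + 1), (m.choose j : ℂ) • act (m + n - j) (p j a b) v)
    -- V is finite (finitely generated over ℂ[∂])
    (hfin : Module.Finite (Polynomial ℂ) V)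
    -- V is nontrivial
    (hnontriv : ∃ (n : ℕ) (a : A) (v : V), act n a v ≠ 0)
    -- V is irreducible: the only conformal submodules are 0 and V
    (hirr : ∀ W : Submodule (Polynomial ℂ) V,
      (∀ (n : ℕ) (a : A), ∀ v ∈ W, act n a v ∈ W) → W = ⊥ ∨ W = ⊤) :
    Module.Free (Polynomial ℂ) V ∧
    ∀ (v : V) (q : Polynomial ℂ), q ≠ 0 → q • v = 0 → v = 0 :=
  finite_irreducible_conformal_module_free_general A V act hlin1 hloc hpv0 hpv hfin hnontriv hirr
end
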